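/- arXiv:1210.1956 — 6 statements merged into one kernel-verified Lean document; each statement's English description precedes it below -/
import Mathlib

section
/- Let $A_k \subset \mathbb{R} \setminus \{0\}$, $k=1,2,\ldots$, be a sequence of nonempty finite sets such that $\max A_{k+1} \le \frac{1}{4}\, d(A_k)$ for all $k$, where $d(A)$ denotes the minimal distance between two distinct points of $A$ if $\#A \ge 2$, and $d(\{x\}) = |x|$. Then whenever $x_1 + x_2 + \cdots + x_n = y_1 + y_2 + \cdots + y_n$ with $x_i, y_i \in A_i$ for each $i$, one has $x_i = y_i$ for all $i = 1, \ldots, n$. -/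
/-- Minimal gap of a finite set: min distance between distinct points if `2 ≤ card`,
and `|x|` for a singleton `{x}`. -/
noncomputable def dGap (A : Finset ℝ) : ℝ :=
  if 2 ≤ A.card then sInf {r : ℝ | ∃ x ∈ A, ∃ y ∈ A, x ≠ y ∧ r = |x - y|}
  else sInf {r : ℝ | ∃ x ∈ A, r = |x|}

/-- `max A = max_{a ∈ A} |a|`. -/
noncomputable def maxAbs (A : Finset ℝ) : ℝ := sSup {r : ℝ | ∃ x ∈ A, r = |x|}

/-!
Write `M k = maxAbs (A k)`. Since `dGap A ≤ 2 * maxAbs A`, the hypothesis gives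
`M (k + 1) ≤ M k / 2`, so for `x i, y i ∈ A i` the tail `∑_{1 ≤ i < n} (x i - y i)` has absolute
value at most `2 * (M 1 + M 2 + ⋯) < 4 * M 1 ≤ dGap (A 0)`, the strict inequality because the
sum is finite and every `M k` is positive. Hence equal sums force `x 0 = y 0`
(otherwise `|x 0 - y 0| ≥ dGap (A 0)`), and induction on `n` finishes.
-/

lemma abs_le_maxAbs {A : Finset ℝ} {a : ℝ} (ha : a ∈ A) : |a| ≤ maxAbs A := by
  have hfin : {r : ℝ | ∃ x ∈ A, r = |x|}.Finite :=
    (A.finite_toSet.image abs).subset (by rintro r ⟨x, hx, rfl⟩; exact ⟨x, hx, rfl⟩)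
  exact le_csSup hfin.bddAbove ⟨a, ha, rfl⟩

lemma maxAbs_pos {A : Finset ℝ} (hA : A.Nonempty) (h0 : ∀ a ∈ A, a ≠ 0) : 0 < maxAbs A := by
  obtain ⟨a, ha⟩ := hA
  exact (abs_pos.mpr (h0 a ha)).trans_le (abs_le_maxAbs ha)

lemma abs_sub_le_two_mul_maxAbs {A : Finset ℝ} {a b : ℝ} (ha : a ∈ A) (hb : b ∈ A) :
    |a - b| ≤ 2 * maxAbs A := by
  linarith [abs_sub a b, abs_le_maxAbs ha, abs_le_maxAbs hb]

lemma dGap_le_abs_sub {A : Finset ℝ} {a b : ℝ} (ha : a ∈ A) (hb : b ∈ A) (hab : a ≠ b) :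
    dGap A ≤ |a - b| := by
  rw [dGap, if_pos (show 2 ≤ A.card from Finset.one_lt_card.mpr ⟨a, ha, b, hb, hab⟩)]
  refine csInf_le ⟨0, ?_⟩ ⟨a, ha, b, hb, hab, rfl⟩
  rintro r ⟨x, -, y, -, -, rfl⟩
  exact abs_nonneg _

lemma dGap_le_two_mul_maxAbs {A : Finset ℝ} (hA : A.Nonempty) : dGap A ≤ 2 * maxAbs A := by
  by_cases h2 : 2 ≤ A.card
  · obtain ⟨a, ha, b, hb, hab⟩ := Finset.one_lt_card.mp h2
    exact (dGap_le_abs_sub ha hb hab).trans (abs_sub_le_two_mul_maxAbs ha hb)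
  · obtain ⟨a, ha⟩ := hA
    rw [dGap, if_neg h2]
    have hinf : sInf {r : ℝ | ∃ x ∈ A, r = |x|} ≤ |a| := by
      refine csInf_le ⟨0, ?_⟩ ⟨a, ha, rfl⟩
      rintro r ⟨x, -, rfl⟩
      exact abs_nonneg x
    linarith [abs_nonneg a, abs_le_maxAbs ha]

lemma sum_range_add_two_mul_le_of_halving {M : ℕ → ℝ} (hM : ∀ k, M (k + 1) ≤ M k / 2) (n : ℕ) :
    ∑ i ∈ Finset.range n, M i + 2 * M n ≤ 2 * M 0 := by
  induction n with
  | zero => simp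
  | succ n ih => rw [Finset.sum_range_succ]; linarith [hM n]

lemma abs_sum_sub_lt_four_mul_maxAbs (A : ℕ → Finset ℝ) (hne : ∀ k, (A k).Nonempty)
    (h0 : ∀ k, ∀ a ∈ A k, a ≠ 0) (hmax : ∀ k, maxAbs (A (k + 1)) ≤ dGap (A k) / 4)
    (n : ℕ) (x y : ℕ → ℝ) (hx : ∀ i < n, x i ∈ A i) (hy : ∀ i < n, y i ∈ A i) :
    |∑ i ∈ Finset.range n, (x i - y i)| < 4 * maxAbs (A 0) := by
  have halving : ∀ k, maxAbs (A (k + 1)) ≤ maxAbs (A k) / 2 := fun k => by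
    linarith [hmax k, dGap_le_two_mul_maxAbs (hne k)]
  have hterm : ∀ i ∈ Finset.range n, |x i - y i| ≤ 2 * maxAbs (A i) := fun i hi =>
    abs_sub_le_two_mul_maxAbs (hx i (Finset.mem_range.mp hi)) (hy i (Finset.mem_range.mp hi))
  calc |∑ i ∈ Finset.range n, (x i - y i)|
      ≤ ∑ i ∈ Finset.range n, |x i - y i| := Finset.abs_sum_le_sum_abs _ _
    _ ≤ ∑ i ∈ Finset.range n, 2 * maxAbs (A i) := Finset.sum_le_sum hterm
    _ = 2 * ∑ i ∈ Finset.range n, maxAbs (A i) := (Finset.mul_sum _ _ _).symm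
    _ < 4 * maxAbs (A 0) := by
      linarith [sum_range_add_two_mul_le_of_halving (M := fun k => maxAbs (A k)) halving n, maxAbs_pos (hne n) (h0 n)]

lemma eq_of_sum_range_succ_eq (A : ℕ → Finset ℝ) (hne : ∀ k, (A k).Nonempty)
    (h0 : ∀ k, ∀ a ∈ A k, a ≠ 0) (hmax : ∀ k, maxAbs (A (k + 1)) ≤ dGap (A k) / 4)
    (n : ℕ) (x y : ℕ → ℝ) (hx : ∀ i < n + 1, x i ∈ A i) (hy : ∀ i < n + 1, y i ∈ A i)
    (hsum : ∑ i ∈ Finset.range (n + 1), x i = ∑ i ∈ Finset.range (n + 1), y i) :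
    x 0 = y 0 := by
  by_contra hxy
  have htail := abs_sum_sub_lt_four_mul_maxAbs (fun k => A (k + 1)) (fun k => hne (k + 1))
    (fun k => h0 (k + 1)) (fun k => hmax (k + 1)) n (fun i => x (i + 1)) (fun i => y (i + 1))
    (fun i hi => hx (i + 1) (by omega)) (fun i hi => hy (i + 1) (by omega))
  have hhead : x 0 - y 0 = -∑ i ∈ Finset.range n, (x (i + 1) - y (i + 1)) := by
    rw [Finset.sum_range_succ', Finset.sum_range_succ'] at hsum
    rw [Finset.sum_sub_distrib]
    linarith
  have hgap := dGap_le_abs_sub (hx 0 n.succ_pos) (hy 0 n.succ_pos) hxy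
  rw [hhead, abs_neg] at hgap
  linarith [hmax 0]

theorem stmt0 (A : ℕ → Finset ℝ)
    (hne : ∀ k, (A k).Nonempty)
    (h0 : ∀ k, ∀ a ∈ A k, a ≠ 0)
    (hmax : ∀ k, maxAbs (A (k + 1)) ≤ dGap (A k) / 4)
    (n : ℕ) (x y : ℕ → ℝ)
    (hx : ∀ i < n, x i ∈ A i) (hy : ∀ i < n, y i ∈ A i)
    (hsum : ∑ i ∈ Finset.range n, x i = ∑ i ∈ Finset.range n, y i) :
    ∀ i < n, x i = y i := by
  induction n generalizing A x y with
  | zero => intro i hi; omega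
  | succ n ih =>
    have hhead := eq_of_sum_range_succ_eq A hne h0 hmax n x y hx hy hsum
    have htail : ∑ i ∈ Finset.range n, x (i + 1) = ∑ i ∈ Finset.range n, y (i + 1) := by
      rw [Finset.sum_range_succ', Finset.sum_range_succ', hhead] at hsum
      linarith
    have := ih (fun k => A (k + 1)) (fun k => hne (k + 1)) (fun k => h0 (k + 1))
      (fun k => hmax (k + 1)) (fun i => x (i + 1)) (fun i => y (i + 1))
      (fun i hi => hx (i + 1) (by omega)) (fun i hi => hy (i + 1) (by omega)) htail
    rintro (_ | i) hi
    · exact hhead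
    · exact this i (by omega)
end

section
/- Let $A_1, \ldots, A_m$ be nonempty finite sets of nonzero reals with $\max A_{k+1} \le \frac14 d(A_k)$ for $1 \le k < m$. Then the sumset $A_1 + A_2 + \cdots + A_m$ has cardinality exactly $\prod_{k=1}^m \#A_k$ (i.e., all sums $x_1 + \cdots + x_m$ with $x_i \in A_i$ are distinct). -/
/-! Pick one element from each `A i` in two ways `f ≠ g`. By induction on `m`,
`0 < |∑ i, (f i - g i)| < 4 * maxAbs (A 0)`. If `f 0 ≠ g 0`, then
`|f 0 - g 0| ≥ dGap (A 0) ≥ 4 * maxAbs (A 1)` strictly exceeds the difference of the tails;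
if `f 0 = g 0`, the difference is that of the tails, which is below
`4 * maxAbs (A 1) ≤ dGap (A 0) ≤ 2 * maxAbs (A 0)`. -/

open Finset Set

lemma maxAbs_set_eq_image (A : Finset ℝ) :
    {r : ℝ | ∃ x ∈ A, r = |x|} = ↑(A.image fun x => |x|) := by
  ext r; simp [eq_comm]

lemma le_maxAbs {A : Finset ℝ} {x : ℝ} (hx : x ∈ A) : |x| ≤ maxAbs A := by
  refine le_csSup ?_ ⟨x, hx, rfl⟩
  rw [maxAbs_set_eq_image]
  exact Finset.bddAbove _

lemma maxAbs_nonneg (A : Finset ℝ) : 0 ≤ maxAbs A :=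
  Real.sSup_nonneg fun _ ⟨_, _, hr⟩ => hr ▸ abs_nonneg _

lemma abs_sub_le_two_maxAbs {A : Finset ℝ} {x y : ℝ} (hx : x ∈ A) (hy : y ∈ A) :
    |x - y| ≤ 2 * maxAbs A := by
  linarith [abs_sub x y, le_maxAbs hx, le_maxAbs hy]

lemma dGap_le {A : Finset ℝ} {x y : ℝ} (hx : x ∈ A) (hy : y ∈ A) (hxy : x ≠ y) :
    dGap A ≤ |x - y| := by
  rw [dGap, if_pos (show 2 ≤ A.card from Finset.one_lt_card.mpr ⟨x, hx, y, hy, hxy⟩)]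
  refine csInf_le ⟨0, ?_⟩ ⟨x, hx, y, hy, hxy, rfl⟩
  rintro _ ⟨_, _, _, _, _, rfl⟩
  exact abs_nonneg _

lemma dGap_le_two_maxAbs (A : Finset ℝ) : dGap A ≤ 2 * maxAbs A := by
  by_cases h2 : 2 ≤ A.card
  · obtain ⟨x, hx, y, hy, hxy⟩ := Finset.one_lt_card.mp h2
    exact (dGap_le hx hy hxy).trans (abs_sub_le_two_maxAbs hx hy)
  · rw [dGap, if_neg h2]
    have hbdd : BddBelow {r : ℝ | ∃ x ∈ A, r = |x|} :=
      ⟨0, fun _ ⟨_, _, hr⟩ => hr ▸ abs_nonneg _⟩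
    have hle : sInf {r : ℝ | ∃ x ∈ A, r = |x|} ≤ maxAbs A :=
      Real.sInf_le_sSup _ hbdd (by rw [maxAbs_set_eq_image]; exact Finset.bddAbove _)
    linarith [maxAbs_nonneg A]

lemma abs_sub_mem_Ioo_of_ne {A : Finset ℝ} {x y : ℝ} (hx : x ∈ A) (hy : y ∈ A) (hxy : x ≠ y) :
    |x - y| ∈ Ioo 0 (4 * maxAbs A) := by
  have hpos : 0 < |x - y| := abs_pos.mpr (sub_ne_zero.mpr hxy)
  have hle := abs_sub_le_two_maxAbs hx hy
  exact ⟨hpos, by linarith⟩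

def GapDominated {m : ℕ} (A : Fin m → Finset ℝ) : Prop :=
  ∀ k : Fin m, ∀ h : (k : ℕ) + 1 < m, maxAbs (A ⟨(k : ℕ) + 1, h⟩) ≤ dGap (A k) / 4

namespace GapDominated

lemma tail {n : ℕ} {A : Fin (n + 1) → Finset ℝ} (hA : GapDominated A) :
    GapDominated fun i : Fin n => A i.succ :=
  fun k h => hA k.succ (by simpa using h)

lemma four_maxAbs_one_le {n : ℕ} {A : Fin (n + 2) → Finset ℝ} (hA : GapDominated A) :
    4 * maxAbs (A 1) ≤ dGap (A 0) := by
  have : maxAbs (A 1) ≤ dGap (A 0) / 4 := hA 0 (by simp)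
  linarith

theorem abs_sum_sub_mem_Ioo {n : ℕ} {A : Fin (n + 1) → Finset ℝ} (hA : GapDominated A)
    {f g : Fin (n + 1) → ℝ} (hf : ∀ i, f i ∈ A i) (hg : ∀ i, g i ∈ A i) (hfg : f ≠ g) :
    |∑ i, (f i - g i)| ∈ Ioo 0 (4 * maxAbs (A 0)) := by
  induction n with
  | zero =>
    have h0 : f 0 ≠ g 0 := fun h => hfg (funext (Fin.cases h fun i => i.elim0))
    rw [Fin.sum_univ_one]
    exact abs_sub_mem_Ioo_of_ne (hf 0) (hg 0) h0
  | succ n ih =>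
    rw [Fin.sum_univ_succ]
    by_cases htail : (fun i : Fin (n + 1) => f i.succ) = fun i => g i.succ
    · have h0 : f 0 ≠ g 0 := fun h => hfg (funext (Fin.cases h (congrFun htail)))
      have ht : ∑ i : Fin (n + 1), (f i.succ - g i.succ) = 0 :=
        Finset.sum_eq_zero fun i _ => sub_eq_zero.mpr (congrFun htail i)
      rw [ht, add_zero]
      exact abs_sub_mem_Ioo_of_ne (hf 0) (hg 0) h0
    · obtain ⟨ht_pos, ht_lt⟩ := ih hA.tail (fun i => hf i.succ) (fun i => hg i.succ) htail
      rw [Fin.succ_zero_eq_one] at ht_lt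
      set t := ∑ i : Fin (n + 1), (f i.succ - g i.succ)
      have hgap := hA.four_maxAbs_one_le
      by_cases h0 : f 0 = g 0
      · rw [h0, sub_self, zero_add]
        exact ⟨ht_pos, by linarith [dGap_le_two_maxAbs (A 0), maxAbs_nonneg (A 0)]⟩
      · have hd := dGap_le (hf 0) (hg 0) h0
        have h2 := abs_sub_le_two_maxAbs (hf 0) (hg 0)
        have hlower : |f 0 - g 0| - |t| ≤ |f 0 - g 0 + t| := by
          simpa using abs_sub (f 0 - g 0 + t) t
        exact ⟨by linarith, by linarith [abs_add_le (f 0 - g 0) t]⟩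

theorem injOn_sum {m : ℕ} {A : Fin m → Finset ℝ} (hA : GapDominated A) :
    InjOn (fun f : Fin m → ℝ => ∑ i, f i) (Fintype.piFinset A) := by
  intro f hf g hg hsum
  simp only [mem_coe, Fintype.mem_piFinset] at hf hg
  by_contra hfg
  cases m with
  | zero => exact hfg (Subsingleton.elim f g)
  | succ n =>
    have hpos := (hA.abs_sum_sub_mem_Ioo hf hg hfg).1
    rw [Finset.sum_sub_distrib, show ∑ i, f i = ∑ i, g i from hsum, sub_self, abs_zero] at hpos
    exact lt_irrefl 0 hpos

end GapDominated

theorem stmt2_general (m : ℕ) (A : Fin m → Finset ℝ)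
    (hmax : ∀ k : Fin m, ∀ h : (k : ℕ) + 1 < m,
      maxAbs (A ⟨(k : ℕ) + 1, h⟩) ≤ dGap (A k) / 4) :
    ((Fintype.piFinset A).image fun f => ∑ i, f i).card = ∏ i, (A i).card := by
  rw [Finset.card_image_of_injOn (GapDominated.injOn_sum hmax), Fintype.card_piFinset]

theorem stmt2 (m : ℕ) (A : Fin m → Finset ℝ)
    (hne : ∀ k, (A k).Nonempty)
    (h0 : ∀ k, ∀ a ∈ A k, a ≠ 0)
    (hmax : ∀ k : Fin m, ∀ h : (k : ℕ) + 1 < m,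
      maxAbs (A ⟨(k : ℕ) + 1, h⟩) ≤ dGap (A k) / 4) :
    ((Fintype.piFinset A).image fun f => ∑ i, f i).card = ∏ i, (A i).card :=
  stmt2_general m A hmax
end

section
/- Let $t \ge x_1 > 0$, let $0 < \varepsilon < 1/3$, and let $0 < r \le \frac{\varepsilon x_1}{2(1-\varepsilon)}$. Define $E_t = \{\lambda > 0 : \{t/\lambda\} \in (\varepsilon, 1-\varepsilon)\}$, where $\{u\}$ denotes the fractional part of $u$. Then the Lebesgue measure of $E_t \cap [0, r]$ is strictly greater than $(1 - 3\varepsilon) r$. -/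
/-!
Outside `E_t`, the quotient `t / λ` lies within `ε` of an integer `m`; for `λ ≤ r` this forces
`m ≥ M := ⌈t / r - ε⌉`, so `(0, r] \ E_t` is covered by the intervals `[t / (m + ε), t / (m - ε)]`,
`m ≥ M`. Such an interval has length `2εt / (m² - ε²) ≤ 2εt / (m² - 1/4)`, and the latter telescopes
as `2εt (1 / (m - 1/2) - 1 / (m + 1/2))`. The whole exceptional set thus has measure at most
`2εt / (M - 1/2)`, which is `< 3εr` because `t / r ≥ 2(1 - ε) / ε > 4`.
-/

open MeasureTheory Set

def nearIntegerSet (t ε a : ℝ) : Set ℝ :=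
  ⋃ j : ℕ, Icc (t / (a + j + ε)) (t / (a + j - ε))

lemma volume_iUnion_Icc_le_of_telescoping {a b g : ℕ → ℝ} (hg : ∀ n, 0 ≤ g n)
    (hg_anti : Antitone g) (hlen : ∀ j, b j - a j ≤ g j - g (j + 1)) :
    volume (⋃ j, Icc (a j) (b j)) ≤ ENNReal.ofReal (g 0) := by
  refine (measure_iUnion_le _).trans (ENNReal.tsum_le_of_sum_range_le fun n => ?_)
  calc ∑ j ∈ Finset.range n, volume (Icc (a j) (b j))
      = ∑ j ∈ Finset.range n, ENNReal.ofReal (b j - a j) := by simp only [Real.volume_Icc]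
    _ ≤ ∑ j ∈ Finset.range n, ENNReal.ofReal (g j - g (j + 1)) :=
        Finset.sum_le_sum fun j _ => ENNReal.ofReal_le_ofReal (hlen j)
    _ = ENNReal.ofReal (∑ j ∈ Finset.range n, (g j - g (j + 1))) :=
        (ENNReal.ofReal_sum_of_nonneg fun j _ => sub_nonneg.2 (hg_anti j.le_succ)).symm
    _ ≤ ENNReal.ofReal (g 0) := by
        rw [Finset.sum_range_sub']
        exact ENNReal.ofReal_le_ofReal (by linarith [hg n])

lemma div_sub_div_le_telescoping {t ε x : ℝ} (ht : 0 ≤ t) (hε : 0 ≤ ε) (hε' : ε ≤ 1 / 2)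
    (hx : 1 / 2 < x) :
    t / (x - ε) - t / (x + ε) ≤ 2 * ε * t / (x - 1 / 2) - 2 * ε * t / (x + 1 / 2) := by
  have hden : (x - 1 / 2) * (x + 1 / 2) ≤ (x - ε) * (x + ε) := by nlinarith
  calc t / (x - ε) - t / (x + ε) = 2 * ε * t / ((x - ε) * (x + ε)) := by
        rw [div_sub_div _ _ (by linarith) (by linarith)]
        ring
    _ ≤ 2 * ε * t / ((x - 1 / 2) * (x + 1 / 2)) :=
        div_le_div_of_nonneg_left (by positivity) (by nlinarith) hden
    _ = 2 * ε * t / (x - 1 / 2) - 2 * ε * t / (x + 1 / 2) := by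
        rw [div_sub_div _ _ (by linarith) (by linarith)]
        ring

lemma volume_nearIntegerSet_le {t ε a : ℝ} (ht : 0 ≤ t) (hε : 0 ≤ ε) (hε' : ε ≤ 1 / 2)
    (ha : 1 / 2 < a) :
    volume (nearIntegerSet t ε a) ≤ ENNReal.ofReal (2 * ε * t / (a - 1 / 2)) := by
  have hpos : ∀ n : ℕ, 0 < a + n - 1 / 2 := fun n => by linarith [n.cast_nonneg (α := ℝ)]
  have h := volume_iUnion_Icc_le_of_telescoping (a := fun j : ℕ => t / (a + j + ε))
    (b := fun j : ℕ => t / (a + j - ε)) (g := fun j : ℕ => 2 * ε * t / (a + j - 1 / 2))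
    (fun n => div_nonneg (by positivity) (hpos n).le)
    (antitone_nat_of_succ_le fun n => div_le_div_of_nonneg_left (by positivity) (hpos n)
      (by push_cast; linarith))
    (fun j => by
      have := div_sub_div_le_telescoping ht hε hε' (x := a + j) (by linarith [hpos j])
      convert this using 3
      push_cast
      ring)
  simpa only [nearIntegerSet, Nat.cast_zero, add_zero] using h

lemma exists_int_abs_sub_le_of_fract_notMem_Ioo {u ε : ℝ} (h : Int.fract u ∉ Ioo ε (1 - ε)) :
    ∃ m : ℤ, |u - m| ≤ ε := by
  have hfract := Int.self_sub_floor u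
  rcases le_or_gt (Int.fract u) ε with hle | hgt
  · exact ⟨⌊u⌋, abs_le.2 ⟨by linarith [Int.fract_nonneg u], by linarith⟩⟩
  · have hge : 1 - ε ≤ Int.fract u := not_lt.1 fun hlt => h ⟨hgt, hlt⟩
    exact ⟨⌊u⌋ + 1, abs_le.2 ⟨by push_cast; linarith, by push_cast; linarith [Int.fract_lt_one u]⟩⟩

lemma mem_nearIntegerSet {t ε l : ℝ} {M m : ℤ} (hl : 0 < l) (hεM : ε < M) (hMm : M ≤ m)
    (hm : |t / l - m| ≤ ε) : l ∈ nearIntegerSet t ε M := by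
  obtain ⟨hm₁, hm₂⟩ := abs_le.1 hm
  have hj : (M : ℝ) + ((m - M).toNat : ℕ) = m := by
    rw [← Int.cast_natCast, Int.toNat_of_nonneg (sub_nonneg.2 hMm)]
    push_cast
    ring
  refine mem_iUnion.2 ⟨(m - M).toNat, ?_⟩
  have hmM : (M : ℝ) ≤ m := by exact_mod_cast hMm
  have hlo : (m - ε) * l ≤ t := by rw [← le_div_iff₀ hl]; linarith
  have hhi : t ≤ (m + ε) * l := by rw [← div_le_iff₀ hl]; linarith
  rw [hj, mem_Icc, div_le_iff₀ (by linarith), le_div_iff₀ (by linarith)]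
  constructor <;> linarith

lemma Ioc_subset_union_nearIntegerSet {t ε r : ℝ} (ht : 0 ≤ t) (hε : 2 * ε < t / r) :
    Ioc 0 r ⊆ ({l | 0 < l ∧ Int.fract (t / l) ∈ Ioo ε (1 - ε)} ∩ Icc 0 r) ∪
      nearIntegerSet t ε ⌈t / r - ε⌉ := by
  rintro l ⟨hl, hlr⟩
  by_cases hfract : Int.fract (t / l) ∈ Ioo ε (1 - ε)
  · exact Or.inl ⟨⟨hl, hfract⟩, hl.le, hlr⟩
  obtain ⟨m, hm⟩ := exists_int_abs_sub_le_of_fract_notMem_Ioo hfract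
  have htl : t / r ≤ t / l := div_le_div_of_nonneg_left ht hl hlr
  have hm_ge : t / r - ε ≤ m := by linarith [(abs_le.1 hm).2]
  exact Or.inr (mem_nearIntegerSet hl (by linarith [Int.le_ceil (t / r - ε)])
    (Int.ceil_le.2 hm_ge) hm)

lemma two_mul_div_sub_half_lt {t ε r M : ℝ} (hε : 0 < ε) (hε' : ε < 1 / 3) (hr : 0 < r)
    (htr : 4 * r < t) (hM : t / r - ε ≤ M) :
    2 * ε * t / (M - 1 / 2) < 3 * ε * r := by
  have hrM : t - ε * r ≤ r * M := by
    have := mul_le_mul_of_nonneg_left hM hr.le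
    rwa [mul_sub, mul_div_cancel₀ t hr.ne', mul_comm r ε] at this
  rw [div_lt_iff₀ (by nlinarith)]
  nlinarith [mul_pos hε hr]

theorem stmt3 (t x1 ε r : ℝ) (hx1 : 0 < x1) (ht : x1 ≤ t)
    (hε : 0 < ε) (hε' : ε < 1 / 3)
    (hr : 0 < r) (hr' : r ≤ ε * x1 / (2 * (1 - ε))) :
    (1 - 3 * ε) * r <
      (MeasureTheory.volume
        ({l : ℝ | 0 < l ∧ Int.fract (t / l) ∈ Set.Ioo ε (1 - ε)} ∩ Set.Icc 0 r)).toReal := by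
  have ht0 : 0 < t := hx1.trans_le ht
  have h4r : 4 * r < t := by
    rw [le_div_iff₀ (by linarith)] at hr'
    nlinarith
  have htr : 4 < t / r := (lt_div_iff₀ hr).2 (by linarith)
  set S := {l : ℝ | 0 < l ∧ Int.fract (t / l) ∈ Ioo ε (1 - ε)} ∩ Icc 0 r
  set M : ℤ := ⌈t / r - ε⌉
  have hM : t / r - ε ≤ M := Int.le_ceil _
  have hcover : Ioc 0 r ⊆ S ∪ nearIntegerSet t ε M :=
    Ioc_subset_union_nearIntegerSet ht0.le (by linarith)
  have hB := volume_nearIntegerSet_le (t := t) (ε := ε) (a := M) ht0.le hε.le (by linarith)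
    (by linarith)
  have hsmall := two_mul_div_sub_half_lt hε hε' hr h4r hM
  have hS : volume S ≠ ⊤ := measure_ne_top_of_subset inter_subset_right (by simp)
  have hBfin : volume (nearIntegerSet t ε M) ≠ ⊤ := ne_top_of_le_ne_top ENNReal.ofReal_ne_top hB
  calc (1 - 3 * ε) * r < r - 2 * ε * t / (M - 1 / 2) := by linarith
    _ ≤ volume.real (Ioc 0 r) - volume.real (nearIntegerSet t ε M) := by
        rw [Real.volume_real_Ioc_of_le hr.le, sub_zero]
        linarith [show volume.real (nearIntegerSet t ε M) ≤ _ from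
          ENNReal.toReal_le_of_le_ofReal (div_nonneg (by positivity) (by linarith)) hB]
    _ ≤ volume.real S := by
        linarith [measureReal_mono hcover (measure_union_ne_top hS hBfin),
          measureReal_union_le (μ := volume) S (nearIntegerSet t ε M)]
end

section
/- Let $F = \{t > 0 : \{t\} \in (\varepsilon, 1-\varepsilon)\}$ and $\lambda > 0$. Then $\bigcup_{x :\ \{x/\lambda\} < \varepsilon} (\lambda F + x) = \{t : \{t/\lambda\} > \varepsilon\}$, where the union is over all real $x$ with fractional part of $x/\lambda$ less than $\varepsilon$, and $\lambda F + x = \{\lambda f + x : f \in F\}$. -/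
/-!
Write `t / λ = f + x / λ`. If `{f} ∈ (ε, 1 - ε)` and `{x / λ} < ε`, the two fractional parts add
up to less than `1`, so `{t / λ} = {f} + {x / λ} > ε`. Conversely, if `s = {t / λ} > ε`, any
`c` with `max ε (s - ε) < c < min (1 - ε) s` (an interval that is nonempty because `ε < 1/2`)
serves as `f = c`, with `x = t - λ c`, for which `{x / λ} = s - c < ε`.
-/

open Int Set

section FloorRing

variable {R : Type*} [Ring R] [LinearOrder R] [IsStrictOrderedRing R] [FloorRing R]

theorem Int.fract_add_of_fract_add_fract_lt_one {a b : R} (h : fract a + fract b < 1) :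
    fract (a + b) = fract a + fract b :=
  fract_eq_iff.2 ⟨add_nonneg (fract_nonneg a) (fract_nonneg b), h,
    ⌊a⌋ + ⌊b⌋, by rw [cast_add, ← self_sub_fract, ← self_sub_fract]; abel⟩

theorem Int.fract_sub_of_le_fract {a c : R} (hc₀ : 0 ≤ c) (hc : c ≤ fract a) :
    fract (a - c) = fract a - c :=
  fract_eq_iff.2 ⟨sub_nonneg.2 hc, (sub_le_self _ hc₀).trans_lt (fract_lt_one a),
    ⌊a⌋, by rw [← self_sub_fract]; abel⟩

theorem lt_fract_add_of_fract_mem_Ioo {ε a b : R} (ha : fract a ∈ Ioo ε (1 - ε))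
    (hb : fract b < ε) : ε < fract (a + b) := by
  obtain ⟨ha₁, ha₂⟩ := ha
  rw [fract_add_of_fract_add_fract_lt_one ((add_lt_add ha₂ hb).trans_eq (sub_add_cancel 1 ε))]
  exact ha₁.trans_le (le_add_of_nonneg_right (fract_nonneg b))

end FloorRing

theorem exists_pos_fract_mem_Ioo_fract_sub_lt {k : Type*} [Field k] [LinearOrder k]
    [IsStrictOrderedRing k] [FloorRing k] {ε a : k} (hε₀ : 0 < ε) (hε : ε < 1 - ε)
    (ha : ε < fract a) :
    ∃ c, (0 < c ∧ fract c ∈ Ioo ε (1 - ε)) ∧ fract (a - c) < ε := by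
  have ha₁ := fract_lt_one a
  obtain ⟨c, hc_lo, hc_hi⟩ : ∃ c, max ε (fract a - ε) < c ∧ c < min (1 - ε) (fract a) :=
    exists_between (max_lt (lt_min hε ha) (lt_min (by linarith) (by linarith)))
  rw [max_lt_iff] at hc_lo
  rw [lt_min_iff] at hc_hi
  have hc : fract c = c := fract_eq_self.2 ⟨by linarith, by linarith⟩
  refine ⟨c, ⟨by linarith, by rw [hc]; exact ⟨hc_lo.1, hc_hi.1⟩⟩, ?_⟩
  rw [fract_sub_of_le_fract (by linarith) hc_hi.2.le]
  linarith

theorem stmt5 (ε lam : ℝ) (hε : 0 < ε) (hε' : ε < 1 / 2) (hlam : 0 < lam) :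
    (⋃ x ∈ {x : ℝ | Int.fract (x / lam) < ε},
        (fun f => lam * f + x) '' {t : ℝ | 0 < t ∧ Int.fract t ∈ Set.Ioo ε (1 - ε)})
      = {t : ℝ | ε < Int.fract (t / lam)} := by
  ext t
  simp only [mem_iUnion, mem_image, mem_ofPred_eq, exists_prop]
  constructor
  · rintro ⟨x, hx, f, ⟨-, hf⟩, rfl⟩
    rw [show (lam * f + x) / lam = f + x / lam by field_simp]
    exact lt_fract_add_of_fract_mem_Ioo hf hx
  · intro ht
    obtain ⟨c, hc, hfract⟩ := exists_pos_fract_mem_Ioo_fract_sub_lt hε (by linarith) ht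
    refine ⟨t - lam * c, ?_, c, hc, by ring⟩
    rwa [show (t - lam * c) / lam = t / lam - c by field_simp]
end

section
/- Let $0 < x_1 \le \cdots \le x_l < 1$ and let $y_1 < \cdots < y_\nu = x_l$ be a maximal $\mathbb{Q}$-linearly independent subset of $\{x_1,\ldots,x_l\}$ containing $x_l$, so that $x_k = \frac{1}{p}\sum_{i=1}^\nu n_i^{(k)} y_i$ with integers $n_i^{(k)}$ and a common denominator $p$. Set $\tau = \max_{i,k}|n_i^{(k)}|$ and for $m \ge 1$ define $A_m = \{\frac{1}{p}(n_1 y_1 + \cdots + n_\nu y_\nu) : n_i \in \mathbb{Z},\ |n_i| \le m\tau \text{ for } i < \nu,\ |n_\nu| \le \nu m \tau + 1\}$. Then for every $x \in A_m \cap (-x_l, 0)$ and every $k \in \{1,\ldots,l\}$, one has $x + x_k \in A_{m+1} \cap (-x_l, x_l)$; that is, $(A_m \cap (-x_l, 0)) + \{x_1,\ldots,x_l\} \subset A_{m+1} \cap (-x_l, x_l)$. -/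
theorem Int.natAbs_add_le_succ_mul {a b : ℤ} {m τ : ℕ} (ha : a.natAbs ≤ m * τ)
    (hb : b.natAbs ≤ τ) : (a + b).natAbs ≤ (m + 1) * τ :=
  calc (a + b).natAbs ≤ a.natAbs + b.natAbs := Int.natAbs_add_le a b
    _ ≤ m * τ + τ := add_le_add ha hb
    _ = (m + 1) * τ := by ring

theorem Int.natAbs_add_le_mul_succ_mul_add_one {a b : ℤ} {ν m τ : ℕ} (hν : 0 < ν)
    (ha : a.natAbs ≤ ν * m * τ + 1) (hb : b.natAbs ≤ τ) :
    (a + b).natAbs ≤ ν * (m + 1) * τ + 1 :=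
  calc (a + b).natAbs ≤ a.natAbs + b.natAbs := Int.natAbs_add_le a b
    _ ≤ (ν * m * τ + 1) + τ := add_le_add ha hb
    _ ≤ ν * (m + 1) * τ + 1 := by nlinarith

theorem Finset.sum_intCast_mul_div_add {ι : Type*} (s : Finset ι) (c d : ι → ℤ) (y : ι → ℝ)
    (p : ℝ) :
    (∑ i ∈ s, (c i : ℝ) * y i) / p + (∑ i ∈ s, (d i : ℝ) * y i) / p =
      (∑ i ∈ s, ((c i + d i : ℤ) : ℝ) * y i) / p := by
  rw [← add_div, ← Finset.sum_add_distrib]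
  push_cast
  simp only [add_mul]

theorem stmt7 (l ν : ℕ) (hl : 0 < l) (hν : 0 < ν)
    (x : Fin l → ℝ) (y : Fin ν → ℝ)
    (hx0 : 0 < x ⟨0, hl⟩) (hxmono : Monotone x)
    (p : ℕ) (n : Fin ν → Fin l → ℤ)
    (hrep : ∀ k, x k = (∑ i, (n i k : ℝ) * y i) / p)
    (τ : ℕ) (hτ : τ = Finset.univ.sup fun ik : Fin ν × Fin l => (n ik.1 ik.2).natAbs)
    (A : ℕ → Set ℝ)
    (hA : ∀ m : ℕ, A m = {z : ℝ | ∃ c : Fin ν → ℤ,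
        (∀ i : Fin ν, (i : ℕ) < ν - 1 → (c i).natAbs ≤ m * τ) ∧
        (c ⟨ν - 1, by omega⟩).natAbs ≤ ν * m * τ + 1 ∧
        z = (∑ i, (c i : ℝ) * y i) / p})
    (m : ℕ) :
    ∀ z ∈ A m ∩ Set.Ioo (-(x ⟨l - 1, by omega⟩)) 0, ∀ k : Fin l,
      z + x k ∈ A (m + 1) ∩ Set.Ioo (-(x ⟨l - 1, by omega⟩)) (x ⟨l - 1, by omega⟩) := by
  rintro z ⟨hzA, hz_gt, hz_lt⟩ k
  rw [hA] at hzA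
  obtain ⟨c, hc, hc_top, rfl⟩ := hzA
  have hn : ∀ i, (n i k).natAbs ≤ τ := fun i =>
    hτ ▸ Finset.le_sup (f := fun ik : Fin ν × Fin l => (n ik.1 ik.2).natAbs)
      (Finset.mem_univ (i, k))
  have hxk_pos : 0 < x k := hx0.trans_le (hxmono (Nat.zero_le _))
  have hxk_le : x k ≤ x ⟨l - 1, by omega⟩ := hxmono (Nat.le_sub_one_of_lt k.isLt)
  refine ⟨?_, by linarith, by linarith⟩
  rw [hA, hrep k, Finset.sum_intCast_mul_div_add]
  exact ⟨fun i => c i + n i k, fun i hi => Int.natAbs_add_le_succ_mul (hc i hi) (hn i),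
    Int.natAbs_add_le_mul_succ_mul_add_one hν hc_top (hn _), rfl⟩
end

section
/- Let $\mu = \sum_{k=1}^l m_k \delta_{x_k}$ with $m_k > 0$, $0 < x_1 < \cdots < x_l < 1$, $|\mu| = \sum_k m_k$, and let $0 < \varepsilon < 1/3$. Then there exist finite sets $E, G \subset (-x_l, x_l)$ such that $E \cap G = \varnothing$, $\#E > \frac{\varepsilon\, \#G}{4}$, and $S_\mu \mathbb{1}_G(x) > (1 - 3\varepsilon)|\mu|$ for all $x \in E$, where $S_\mu f(x) = \sum_{k=1}^l m_k f(x + x_k)$ and $\mathbb{1}_G$ is the indicator function of $G$. -/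
/-!
Let `W n` be the set of sums `∑ c k * x k` with `0 ≤ c k ≤ n`, and `M n` the largest number of
points of `W n` in a window `(a, a + T]`, `T = x_l / 2`. Since `1 ≤ M 0` and
`M n ≤ #(W n) ≤ (n + 1) ^ l`, the count cannot double at every step: `M (n + 1) < 2 * M n` for
some `n`. A fullest window `V` of `W n` has all its shifts `V + x k` in three consecutive windows
of `W (n + 1)`, so `#(V + {x k}) ≤ 6 * #V`; translate `V` into `(-x_l, x_l)`.

Inside `V` choose greedily a set `E` whose points have their shifts in `E` with `μ`-weight
`< 3 ε |μ|`, and let `G = (V + {x k}) \ E`. Each point of `V \ E` has its shifts in `E` with weight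
`≥ 3 ε |μ|`, while `E` receives total weight at most `|μ| * #E`; hence `3 ε (#V - #E) ≤ #E`,
so `#E > 3 ε #V / 2 ≥ ε #G / 4`.
-/

open Finset Filter
open scoped Pointwise

lemma exists_pow_lt_two_pow (d : ℕ) : ∃ n : ℕ, (n + 1) ^ d < 2 ^ n := by
  obtain ⟨n, hn⟩ := (((tendsto_pow_const_div_const_pow_of_one_lt d one_lt_two).comp
    (tendsto_add_atTop_nat 1)).eventually (gt_mem_nhds one_half_pos)).exists
  refine ⟨n, ?_⟩
  rw [Function.comp_apply, div_lt_iff₀ (by positivity), pow_succ] at hn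
  exact_mod_cast (by linarith : ((n + 1 : ℕ) : ℝ) ^ d < 2 ^ n)

lemma exists_lt_two_mul_of_le_pow {f : ℕ → ℕ} {d : ℕ} (h0 : 1 ≤ f 0)
    (hf : ∀ n, f n ≤ (n + 1) ^ d) : ∃ n, f (n + 1) < 2 * f n := by
  by_contra! hdouble
  have hgrowth : ∀ n, 2 ^ n ≤ f n := by
    intro n
    induction n with
    | zero => simpa using h0
    | succ n ih => rw [pow_succ']; exact (Nat.mul_le_mul_left 2 ih).trans (hdouble n)
  obtain ⟨n, hn⟩ := exists_pow_lt_two_pow d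
  exact ((hgrowth n).trans (hf n)).not_gt hn

section BoundedCombinations

variable {ι : Type*} [Fintype ι] [DecidableEq ι] (x : ι → ℝ)

noncomputable def boundedCombinations (n : ℕ) : Finset ℝ :=
  (Fintype.piFinset fun _ : ι => range (n + 1)).image fun c => ∑ k, (c k : ℝ) * x k

lemma zero_mem_boundedCombinations (n : ℕ) : (0 : ℝ) ∈ boundedCombinations x n :=
  mem_image.2 ⟨0, by simp, by simp⟩

lemma card_boundedCombinations_le (n : ℕ) :
    #(boundedCombinations x n) ≤ (n + 1) ^ Fintype.card ι :=
  card_image_le.trans (by simp)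

lemma boundedCombinations_add_subset (n : ℕ) :
    boundedCombinations x n + univ.image x ⊆ boundedCombinations x (n + 1) := by
  intro y hy
  obtain ⟨w, hw, _, hk, rfl⟩ := mem_add.1 hy
  obtain ⟨k, -, rfl⟩ := mem_image.1 hk
  obtain ⟨c, hc, rfl⟩ := mem_image.1 hw
  refine mem_image.2 ⟨c + Pi.single k 1, ?_, ?_⟩
  · simp only [Fintype.mem_piFinset, mem_range] at hc ⊢
    intro j
    have := hc j
    simp only [Pi.add_apply, Pi.single_apply]
    split <;> omega
  · simp [add_mul, sum_add_distrib, Pi.single_apply]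

end BoundedCombinations

section Window

variable (S : Finset ℝ) (T : ℝ)

noncomputable def windowCard (a : ℝ) : ℕ := #{s ∈ S | s ∈ Set.Ioc a (a + T)}

noncomputable def maxWindowCard : ℕ := S.sup fun w => windowCard S T (w - T)

lemma windowCard_le_maxWindowCard (a : ℝ) : windowCard S T a ≤ maxWindowCard S T := by
  obtain hempty | hne := ({s ∈ S | s ∈ Set.Ioc a (a + T)} : Finset ℝ).eq_empty_or_nonempty
  · rw [windowCard, hempty, card_empty]
    exact Nat.zero_le _
  set w := ({s ∈ S | s ∈ Set.Ioc a (a + T)} : Finset ℝ).max' hne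
  have hw := mem_filter.1 (max'_mem _ hne)
  have hsub : {s ∈ S | s ∈ Set.Ioc a (a + T)} ⊆ {s ∈ S | s ∈ Set.Ioc (w - T) (w - T + T)} := by
    intro s hs
    have hsw : s ≤ w := le_max' _ s hs
    obtain ⟨hsS, has, -⟩ := mem_filter.1 hs
    exact mem_filter.2 ⟨hsS, by linarith [hw.2.2], by linarith⟩
  exact (card_le_card hsub).trans (le_sup (f := fun w => windowCard S T (w - T)) hw.1)

lemma windowCard_mul_le (k : ℕ) (a : ℝ) : windowCard S (k * T) a ≤ k * maxWindowCard S T := by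
  induction k with
  | zero => simp [windowCard]
  | succ k ih =>
    have hsub : {s ∈ S | s ∈ Set.Ioc a (a + (k + 1 : ℕ) * T)} ⊆
        {s ∈ S | s ∈ Set.Ioc a (a + k * T)} ∪
          {s ∈ S | s ∈ Set.Ioc (a + k * T) (a + k * T + T)} := by
      intro s hs
      obtain ⟨hsS, has, hsb⟩ := mem_filter.1 hs
      push_cast at hsb
      rcases le_or_gt s (a + k * T) with h | h
      · exact mem_union_left _ (mem_filter.2 ⟨hsS, has, h⟩)
      · exact mem_union_right _ (mem_filter.2 ⟨hsS, h, by linarith⟩)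
    calc windowCard S ((k + 1 : ℕ) * T) a
        ≤ windowCard S (k * T) a + windowCard S T (a + k * T) :=
          (card_le_card hsub).trans (card_union_le _ _)
      _ ≤ k * maxWindowCard S T + maxWindowCard S T :=
          add_le_add ih (windowCard_le_maxWindowCard S T _)
      _ = (k + 1) * maxWindowCard S T := by ring

lemma one_le_maxWindowCard (hT : 0 < T) {w : ℝ} (hw : w ∈ S) : 1 ≤ maxWindowCard S T :=
  (show 0 < windowCard S T (w - T) from
    card_pos.2 ⟨w, mem_filter.2 ⟨hw, by linarith, by linarith⟩⟩).trans_le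
    (windowCard_le_maxWindowCard S T (w - T))

lemma maxWindowCard_le_card : maxWindowCard S T ≤ #S :=
  Finset.sup_le fun _ _ => card_filter_le _ _

lemma exists_windowCard_eq_maxWindowCard (hS : S.Nonempty) :
    ∃ a, windowCard S T a = maxWindowCard S T := by
  obtain ⟨w, -, hw⟩ := exists_mem_eq_sup S hS fun w => windowCard S T (w - T)
  exact ⟨w - T, hw.symm⟩

end Window

lemma exists_subset_Ioc_card_add_le {ι : Type*} [Fintype ι] [DecidableEq ι] (x : ι → ℝ) {T : ℝ}
    (hT : 0 < T) (hx : ∀ k, 0 < x k ∧ x k ≤ 2 * T) (b : ℝ) :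
    ∃ V : Finset ℝ, V.Nonempty ∧ (V : Set ℝ) ⊆ Set.Ioc b (b + T) ∧
      #(V + univ.image x) ≤ 6 * #V := by
  set M := fun n => maxWindowCard (boundedCombinations x n) T
  obtain ⟨n, hn⟩ : ∃ n, M (n + 1) < 2 * M n :=
    exists_lt_two_mul_of_le_pow (one_le_maxWindowCard _ T hT (zero_mem_boundedCombinations x 0))
      fun n => (maxWindowCard_le_card _ T).trans (card_boundedCombinations_le x n)
  obtain ⟨a, ha⟩ := exists_windowCard_eq_maxWindowCard (boundedCombinations x n) T
    ⟨0, zero_mem_boundedCombinations x n⟩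
  set U := {w ∈ boundedCombinations x n | w ∈ Set.Ioc a (a + T)}
  have hU : #U = M n := ha
  have hUX : U + univ.image x ⊆
      {w ∈ boundedCombinations x (n + 1) | w ∈ Set.Ioc a (a + (3 : ℕ) * T)} := by
    intro y hy
    obtain ⟨u, hu, _, hk, rfl⟩ := mem_add.1 hy
    obtain ⟨k, -, rfl⟩ := mem_image.1 hk
    obtain ⟨huW, hau, hua⟩ := mem_filter.1 hu
    have hsum := add_mem_add huW (mem_image_of_mem x (mem_univ k))
    refine mem_filter.2 ⟨boundedCombinations_add_subset x n hsum, ?_, ?_⟩ <;> push_cast <;>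
      linarith [hx k]
  have hUcard : #(U + univ.image x) ≤ 6 * #U :=
    calc #(U + univ.image x) ≤ 3 * M (n + 1) :=
          (card_le_card hUX).trans (windowCard_mul_le _ T 3 a)
      _ ≤ 6 * #U := by omega
  refine ⟨U + {b - a}, ?_, ?_, ?_⟩
  · refine (card_pos.1 ?_).add (singleton_nonempty _)
    rw [hU]
    exact one_le_maxWindowCard _ T hT (zero_mem_boundedCombinations x n)
  · intro y hy
    obtain ⟨u, hu, _, hs, rfl⟩ := mem_add.1 hy
    rw [mem_singleton.1 hs]
    obtain ⟨-, hau, hua⟩ := mem_filter.1 hu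
    constructor <;> linarith
  · rwa [add_right_comm, card_add_singleton, card_add_singleton]

section ShiftSum

variable {ι : Type*} [Fintype ι] (m x : ι → ℝ)

/-- The operator `S_μ` for the measure `μ = ∑ k, m k • δ_{x k}`. -/
noncomputable def shiftSum (f : ℝ → ℝ) (z : ℝ) : ℝ := ∑ k, m k * f (z + x k)

variable {m x}

lemma shiftSum_indicator_insert_of_le (hx : ∀ k, 0 < x k) (A : Finset ℝ) {a z : ℝ}
    (haz : a ≤ z) :
    shiftSum m x (((insert a A : Finset ℝ) : Set ℝ).indicator 1) z =
      shiftSum m x ((A : Set ℝ).indicator 1) z := by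
  refine sum_congr rfl fun k _ => ?_
  have hne : z + x k ≠ a := by linarith [hx k]
  simp [Set.indicator_apply, hne]

variable (m) in
/-- Since all shifts are positive, membership of `z` only depends on `A ∩ (z, ∞)`, so `A` is built
greedily from the largest element of `V` downwards. -/
lemma exists_subset_mem_iff_shiftSum_lt (hx : ∀ k, 0 < x k) (c : ℝ) (V : Finset ℝ) :
    ∃ A ⊆ V, ∀ z ∈ V, z ∈ A ↔ shiftSum m x ((A : Set ℝ).indicator 1) z < c := by
  induction V using Finset.induction_on_min with
  | empty => exact ⟨∅, subset_rfl, by simp⟩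
  | insert a V hlt ih =>
    obtain ⟨A, hAV, hA⟩ := ih
    have haA : a ∉ A := fun h => (hlt a (hAV h)).false
    by_cases hc : shiftSum m x ((A : Set ℝ).indicator 1) a < c
    · refine ⟨insert a A, insert_subset_insert a hAV, fun z hz => ?_⟩
      rcases mem_insert.1 hz with rfl | hz
      · rw [shiftSum_indicator_insert_of_le hx A le_rfl]
        exact iff_of_true (mem_insert_self _ _) hc
      · rw [shiftSum_indicator_insert_of_le hx A (hlt z hz).le, mem_insert,
          or_iff_right (hlt z hz).ne', hA z hz]
    · refine ⟨A, hAV.trans (subset_insert a V), fun z hz => ?_⟩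
      rcases mem_insert.1 hz with rfl | hz
      · simpa [haA] using hc
      · exact hA z hz

variable (x) in
lemma sum_shiftSum_indicator_le (hm : ∀ k, 0 ≤ m k) (U A : Finset ℝ) :
    ∑ z ∈ U, shiftSum m x ((A : Set ℝ).indicator 1) z ≤ (∑ k, m k) * #A := by
  unfold shiftSum
  rw [sum_comm, sum_mul]
  refine sum_le_sum fun k _ => ?_
  have hhits : #{z ∈ U | z + x k ∈ A} ≤ #A :=
    card_le_card_of_injOn (· + x k) (fun z hz => (mem_filter.1 hz).2)
      (add_left_injective (x k)).injOn
  simp_rw [← mul_sum, Set.indicator_apply, mem_coe, Pi.one_apply, sum_boole]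
  exact mul_le_mul_of_nonneg_left (by exact_mod_cast hhits) (hm k)

lemma shiftSum_indicator_sdiff {A B : Finset ℝ} {z : ℝ} (hz : ∀ k, z + x k ∈ B) :
    shiftSum m x (((B \ A : Finset ℝ) : Set ℝ).indicator 1) z =
      ∑ k, m k - shiftSum m x ((A : Set ℝ).indicator 1) z := by
  unfold shiftSum
  rw [← sum_sub_distrib]
  refine sum_congr rfl fun k _ => ?_
  by_cases h : z + x k ∈ A <;> simp [h, hz k]

end ShiftSum

lemma exists_disjoint_shiftSum_indicator_gt {ι : Type*} [Fintype ι] {m x : ι → ℝ}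
    (hm : ∀ k, 0 ≤ m k) (hμ : 0 < ∑ k, m k) (hx : ∀ k, 0 < x k) {ε : ℝ} (hε : 0 < ε)
    (hε' : ε < 1 / 3) {V : Finset ℝ} (hV : V.Nonempty) (hVX : #(V + univ.image x) ≤ 6 * #V) :
    ∃ E ⊆ V, ∃ G ⊆ V + univ.image x, Disjoint E G ∧ ε * #G / 4 < #E ∧
      ∀ z ∈ E, (1 - 3 * ε) * ∑ k, m k < shiftSum m x ((G : Set ℝ).indicator 1) z := by
  obtain ⟨A, hAV, hA⟩ := exists_subset_mem_iff_shiftSum_lt m hx (3 * ε * ∑ k, m k) V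
  have hshift : ∀ z ∈ A, ∀ k, z + x k ∈ V + univ.image x := fun z hz k =>
    add_mem_add (hAV hz) (mem_image_of_mem x (mem_univ k))
  refine ⟨A, hAV, (V + univ.image x) \ A, sdiff_subset, disjoint_sdiff, ?_, fun z hz => ?_⟩
  · have hrejected : 3 * ε * (∑ k, m k) * #(V \ A) ≤ (∑ k, m k) * #A := by
      refine le_trans ?_ (sum_shiftSum_indicator_le x hm (V \ A) A)
      rw [mul_comm, ← nsmul_eq_mul]
      exact card_nsmul_le_sum _ _ _ fun z hz =>
        not_lt.1 ((hA z (mem_sdiff.1 hz).1).not.1 (mem_sdiff.1 hz).2)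
    have hA' : 3 * ε * ((#V : ℝ) - #A) ≤ #A := by
      rw [card_sdiff_of_subset hAV, Nat.cast_sub (card_le_card hAV)] at hrejected
      nlinarith
    have hG : ((#((V + univ.image x) \ A) : ℕ) : ℝ) ≤ 6 * #V := by
      exact_mod_cast (card_le_card sdiff_subset).trans hVX
    have hV1 : (1 : ℝ) ≤ #V := by exact_mod_cast card_pos.2 hV
    have hApos : (0 : ℝ) < #A := by nlinarith
    nlinarith
  · rw [shiftSum_indicator_sdiff (hshift z hz)]
    linarith [(hA z (hAV hz)).1 hz]

theorem stmt10 (l : ℕ) (hl : 0 < l) (m x : Fin l → ℝ)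
    (hm : ∀ k, 0 < m k) (hx0 : ∀ k, 0 < x k) (hxmono : StrictMono x)
    (ε : ℝ) (hε : 0 < ε) (hε' : ε < 1 / 3) :
    ∃ E G : Finset ℝ,
      (↑E : Set ℝ) ⊆ Set.Ioo (-(x ⟨l - 1, by omega⟩)) (x ⟨l - 1, by omega⟩) ∧
      (↑G : Set ℝ) ⊆ Set.Ioo (-(x ⟨l - 1, by omega⟩)) (x ⟨l - 1, by omega⟩) ∧
      Disjoint E G ∧
      ε * (G.card : ℝ) / 4 < (E.card : ℝ) ∧
      ∀ z ∈ E, (1 - 3 * ε) * (∑ k, m k) <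
        ∑ k, m k * Set.indicator (↑G : Set ℝ) 1 (z + x k) := by
  set L := x ⟨l - 1, by omega⟩
  have hxL : ∀ k, x k ≤ L := fun k =>
    hxmono.monotone (Fin.le_def.2 (Nat.le_sub_one_of_lt k.isLt))
  have hL : 0 < L := hx0 _
  obtain ⟨V, hV, hVwin, hVX⟩ := exists_subset_Ioc_card_add_le x (half_pos hL)
    (fun k => ⟨hx0 k, by linarith [hxL k]⟩) (-(3 * L / 4))
  have hμ : 0 < ∑ k, m k := sum_pos (fun k _ => hm k) ⟨⟨0, hl⟩, mem_univ _⟩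
  obtain ⟨E, hEV, G, hGVX, hEG, hcard, hE⟩ := exists_disjoint_shiftSum_indicator_gt
    (fun k => (hm k).le) hμ hx0 hε hε' hV hVX
  have hVXwin : ((V + univ.image x : Finset ℝ) : Set ℝ) ⊆ Set.Ioo (-L) L := by
    intro y hy
    obtain ⟨v, hv, _, hk, rfl⟩ := mem_add.1 hy
    obtain ⟨k, -, rfl⟩ := mem_image.1 hk
    obtain ⟨h1, h2⟩ := hVwin hv
    constructor <;> linarith [hx0 k, hxL k]
  have hVwin' : (V : Set ℝ) ⊆ Set.Ioo (-L) L := fun v hv => by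
    obtain ⟨h1, h2⟩ := hVwin hv
    constructor <;> linarith
  exact ⟨E, G, (coe_subset.2 hEV).trans hVwin', (coe_subset.2 hGVX).trans hVXwin, hEG, hcard, hE⟩
end
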